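/- Let μ, λ, κ be cardinals with ω ≤ μ < λ ≤ κ. Then A(μ)^κ ∈ Δ(λ): the set S of finite-support points of A(μ)^κ is dense and satisfies (i) w(cl(T)) < λ for every T ⊆ S with |T| < λ, and (ii) |f[S]| = λ for every continuous surjection f from A(μ)^κ onto a Hausdorff space Y with w(Y) = λ. -/

import Mathlib

open Cardinal Set Function

universe u

noncomputable section

/-- The density of a topological space: least cardinality of a dense subset. -/
def tdensity (X : Type u) [TopologicalSpace X] : Cardinal.{u} :=
  sInf {c : Cardinal.{u} | ∃ s : Set X, Dense s ∧ #s = c}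

/-- The weight of a topological space: least cardinality of a base. -/
def tweight (X : Type u) [TopologicalSpace X] : Cardinal.{u} :=
  sInf {c : Cardinal.{u} | ∃ B : Set (Set X), TopologicalSpace.IsTopologicalBasis B ∧ #B = c}

/-- The π-weight: least cardinality of a π-base. -/
def piWeight (X : Type u) [TopologicalSpace X] : Cardinal.{u} :=
  sInf {c : Cardinal.{u} | ∃ B : Set (Set X),
    (∀ U ∈ B, IsOpen U ∧ U.Nonempty) ∧
    (∀ V : Set X, IsOpen V → V.Nonempty → ∃ U ∈ B, U ⊆ V) ∧ #B = c}

/-- ĉ(X): the least cardinal κ such that X has no pairwise disjoint family of κ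
nonempty open sets. -/
def hatCell (X : Type u) [TopologicalSpace X] : Cardinal.{u} :=
  sInf {c : Cardinal.{u} | ¬ ∃ 𝒰 : Set (Set X),
    (∀ U ∈ 𝒰, IsOpen U ∧ U.Nonempty) ∧ 𝒰.PairwiseDisjoint id ∧ #𝒰 = c}

/-- `H` is a closed G_λ set: closed and the intersection of at most λ open sets. -/
def IsClosedGLambda (lam : Cardinal.{u}) {X : Type u} [TopologicalSpace X] (H : Set X) : Prop :=
  IsClosed H ∧ ∃ 𝒰 : Set (Set X), (∀ U ∈ 𝒰, IsOpen U) ∧ #𝒰 ≤ lam ∧ H = ⋂₀ 𝒰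

/-- X ∈ Γ(λ): every closed G_λ set has density ≤ λ. -/
def InGamma (lam : Cardinal.{u}) (X : Type u) [TopologicalSpace X] : Prop :=
  ∀ H : Set X, IsClosedGLambda lam H → tdensity ↥H ≤ lam

/-- `S` witnesses `X ∈ Δ(λ)`. -/
def DeltaWitness (lam : Cardinal.{u}) (X : Type u) [TopologicalSpace X] (S : Set X) : Prop :=
  Dense S ∧
  (∀ T : Set X, T ⊆ S → #T < lam → tweight ↥(closure T) < lam) ∧
  (∀ (Y : Type u) (_ : TopologicalSpace Y), T2Space Y → ∀ f : X → Y,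
     Continuous f → Surjective f → tweight Y = lam → #(f '' S) = lam)

/-- X ∈ Δ(λ). -/
def InDelta (lam : Cardinal.{u}) (X : Type u) [TopologicalSpace X] : Prop :=
  lam ≤ tweight X ∧ ∃ S : Set X, DeltaWitness lam X S

/-- A canonical discrete space of cardinality `c`. -/
instance (c : Cardinal.{u}) : TopologicalSpace c.out := ⊥

instance (c : Cardinal.{u}) : DiscreteTopology c.out := ⟨rfl⟩

/-- A(μ): one-point compactification of a discrete space of cardinality μ. -/
def ACompact (μ : Cardinal.{u}) : Type u := OnePoint μ.out

instance (μ : Cardinal.{u}) : TopologicalSpace (ACompact μ) :=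
  inferInstanceAs (TopologicalSpace (OnePoint μ.out))

/-- A(μ)^κ. -/
def APow (μ κ : Cardinal.{u}) : Type u := κ.out → ACompact μ

instance (μ κ : Cardinal.{u}) : TopologicalSpace (APow μ κ) :=
  inferInstanceAs (TopologicalSpace (κ.out → ACompact μ))

/-- The set of finite-support points of A(μ)^κ. -/
def finSupport (μ κ : Cardinal.{u}) : Set (APow μ κ) :=
  {x | {ξ | x ξ ≠ (OnePoint.infty : OnePoint μ.out)}.Finite}

/-- X is polyadic: a continuous image of some A(μ)^κ. -/
def IsPolyadic (X : Type u) [TopologicalSpace X] : Prop :=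
  ∃ μ κ : Cardinal.{u}, ℵ₀ ≤ μ ∧ ∃ f : APow μ κ → X, Continuous f ∧ Surjective f


/-!
A finite-support point is `∞` off finitely many coordinates, so a set `T ⊆ S` with `|T| < λ`
lies, together with its closure, in the face `{x | x = ∞ off J}` for a set `J` of fewer than `λ`
coordinates; that face embeds in `A(μ)^J`, of weight at most `|J| · μ < λ`.

For a continuous surjection `f` onto `Y` of weight `λ`, `Y` has `λ` continuous real functions
separating points. By Stone–Weierstrass each of them, composed with `f`, depends on countably many
coordinates, so `f` depends only on a set `J` of at most `λ` coordinates and `f[S]` is the image of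
the at most `λ` finite-support points with support in `J`. Conversely, if `|f[S]| < λ`, choose
`T ⊆ S` of the same size with `f[T] = f[S]`; then `f[cl T] = Y` and `w(Y) ≤ w(cl T) < λ`.

The open sets `{x | x ξ = a}` for `ξ < κ` show that `w(A(μ)^κ) ≥ κ`.
-/

open TopologicalSpace Topology OnePoint

lemma Cardinal.mk_finset_le_max (α : Type u) : #(Finset α) ≤ max ℵ₀ #α := by
  classical
  exact (mk_le_of_surjective List.toFinset_surjective).trans (mk_list_le_max α)

lemma Cardinal.mk_biUnion_le_mul_aleph0 {α ι : Type u} {s : Set ι} {A : ι → Set α}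
    (hA : ∀ i ∈ s, (A i).Countable) : #(⋃ i ∈ s, A i) ≤ #s * ℵ₀ := by
  rw [biUnion_eq_iUnion]
  calc #(⋃ i : s, A i) ≤ sum fun i : s => #(A i) := mk_iUnion_le_sum_mk
    _ ≤ sum fun _ : s => ℵ₀ := sum_le_sum _ _ fun i => (hA i i.2).le_aleph0
    _ = #s * ℵ₀ := by simp

section Weight

variable {X Y : Type u} [TopologicalSpace X] [TopologicalSpace Y]

lemma tweight_le_mk {B : Set (Set X)} (hB : IsTopologicalBasis B) : tweight X ≤ #B :=
  csInf_le (OrderBot.bddBelow _) ⟨B, hB, rfl⟩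

lemma tweight_le_mk_of_subset_range {α : Type u} {B : Set (Set X)} (hB : IsTopologicalBasis B)
    {g : α → Set X} (hBg : B ⊆ range g) : tweight X ≤ #α :=
  (tweight_le_mk hB).trans ((mk_le_mk_of_subset hBg).trans mk_range_le)

lemma exists_isTopologicalBasis_mk_eq_tweight (X : Type u) [TopologicalSpace X] :
    ∃ B : Set (Set X), IsTopologicalBasis B ∧ #B = tweight X :=
  csInf_mem (s := {c | ∃ B : Set (Set X), IsTopologicalBasis B ∧ #B = c})
    ⟨_, _, isTopologicalBasis_opens, rfl⟩

lemma mk_le_tweight_of_mem_iff {ι : Type u} (e : ι → X) (U : ι → Set X)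
    (hU : ∀ i, IsOpen (U i)) (he : ∀ i j, e j ∈ U i ↔ j = i) : #ι ≤ tweight X := by
  obtain ⟨B, hB, hBw⟩ := exists_isTopologicalBasis_mk_eq_tweight X
  choose b hbB hb hbU using fun i => hB.exists_subset_of_mem_open ((he i i).2 rfl) (hU i)
  have hinj : Injective fun i => (⟨b i, hbB i⟩ : B) := fun i j hij =>
    ((he i j).1 (hbU i (by rw [show b i = b j from congrArg Subtype.val hij]; exact hb j))).symm
  exact hBw ▸ mk_le_of_injective hinj

lemma tweight_le_of_isInducing {f : X → Y} (hf : IsInducing f) : tweight X ≤ tweight Y := by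
  obtain ⟨B, hB, hBw⟩ := exists_isTopologicalBasis_mk_eq_tweight Y
  exact hBw ▸ (tweight_le_mk (hB.isInducing hf)).trans mk_image_le

lemma tweight_pi_le (ι : Type u) : tweight (ι → X) ≤ max ℵ₀ (#ι * tweight X) := by
  classical
  obtain ⟨B, hB, hBw⟩ := exists_isTopologicalBasis_mk_eq_tweight X
  refine (tweight_le_mk_of_subset_range (isTopologicalBasis_pi (X := fun _ : ι => X) fun _ => hB)
    (g := fun s : Finset (ι × B) => ⋂ p ∈ s, (fun x : ι → X => x p.1) ⁻¹' (p.2 : Set X))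
    ?_).trans ?_
  · rintro _ ⟨U, F, hU, rfl⟩
    refine ⟨F.attach.image fun i : {i // i ∈ F} => (i.1, ⟨U i, hU i i.2⟩), ?_⟩
    ext x
    simp only [mem_iInter, Finset.mem_image, Finset.mem_attach, true_and, mem_preimage, Set.mem_pi,
      Finset.mem_coe, forall_exists_index]
    exact ⟨fun h i hi => h _ ⟨i, hi⟩ rfl, by rintro h _ ⟨i, hi⟩ rfl; exact h i hi⟩
  · simpa [hBw] using mk_finset_le_max (ι × B)

lemma tweight_onePoint_le (D : Type u) [TopologicalSpace D] [DiscreteTopology D] :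
    tweight (OnePoint D) ≤ max ℵ₀ #D := by
  let g : D ⊕ Finset D → Set (OnePoint D) :=
    Sum.elim (fun a => {(a : OnePoint D)}) fun s => ((↑) '' (s : Set D))ᶜ
  have hbasis : IsTopologicalBasis (range g) := by
    refine isTopologicalBasis_of_isOpen_of_nhds ?_ ?_
    · rintro _ ⟨a | s, rfl⟩
      · simp [g, ← image_singleton]
      · exact isOpen_compl_image_coe.2 ⟨isClosed_discrete _, s.finite_toSet.isCompact⟩
    · intro x V hx hV
      induction x using OnePoint.rec with
      | infty =>
        have hfin := ((isOpen_iff_of_mem' hx).1 hV).1.finite_of_discrete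
        refine ⟨g (.inr hfin.toFinset), mem_range_self _, infty_notMem_image_coe, ?_⟩
        intro y hy
        induction y using OnePoint.rec with
        | infty => exact hx
        | coe b => simpa [g] using hy
      | coe a => exact ⟨g (.inl a), mem_range_self _, rfl, by simpa [g] using hx⟩
  calc tweight (OnePoint D) ≤ #(D ⊕ Finset D) := tweight_le_mk_of_subset_range hbasis subset_rfl
    _ = #D + #(Finset D) := by simp
    _ ≤ max (max #D #(Finset D)) ℵ₀ := add_le_max _ _
    _ ≤ max ℵ₀ #D := max_le (max_le (le_max_right _ _) (mk_finset_le_max D)) (le_max_left _ _)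

end Weight

section Compact

variable {X Y : Type u} [TopologicalSpace X] [TopologicalSpace Y]

lemma IsCompact.exists_finset_basis_cover {B : Set (Set X)} (hB : IsTopologicalBasis B)
    {C W : Set X} (hC : IsCompact C) (hW : IsOpen W) (hCW : C ⊆ W) :
    ∃ F : Finset B, C ⊆ ⋃ u ∈ F, (u : Set X) ∧ ⋃ u ∈ F, (u : Set X) ⊆ W := by
  obtain ⟨b, hbW, hb, hCb⟩ := hC.elim_finite_subcover_image (b := {u : B | (u : Set X) ⊆ W})
    (c := Subtype.val) (fun u _ => hB.isOpen u.2) fun x hx => by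
      obtain ⟨u, huB, hxu, huW⟩ := hB.exists_subset_of_mem_open (hCW hx) hW
      exact mem_biUnion (x := ⟨u, huB⟩) huW hxu
  refine ⟨hb.toFinset, by simpa using hCb, ?_⟩
  exact iUnion₂_subset fun u hu => hbW (hb.mem_toFinset.1 hu)

/-- The complements of the images of the closed sets `Uᶜ`, `U` a finite union of basic open sets,
form a basis of `Y`. -/
lemma tweight_le_of_continuous_surjective [CompactSpace X] [T2Space Y] {f : X → Y}
    (hf : Continuous f) (hsurj : Surjective f) : tweight Y ≤ max ℵ₀ (tweight X) := by
  obtain ⟨B, hB, hBw⟩ := exists_isTopologicalBasis_mk_eq_tweight X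
  let g : Finset B → Set Y := fun F => (f '' (⋃ u ∈ F, (u : Set X))ᶜ)ᶜ
  have hbasis : IsTopologicalBasis (range g) := by
    refine isTopologicalBasis_of_isOpen_of_nhds ?_ fun y V hy hV => ?_
    · rintro _ ⟨F, rfl⟩
      have hU : IsOpen (⋃ u ∈ F, (u : Set X)) := isOpen_biUnion fun u _ => hB.isOpen u.2
      exact ((hU.isClosed_compl.isCompact.image hf).isClosed).isOpen_compl
    obtain ⟨F, hyF, hFV⟩ := (isClosed_singleton.preimage hf).isCompact.exists_finset_basis_cover
      hB (hV.preimage hf) fun x (hx : f x = y) => show f x ∈ V from hx ▸ hy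
    refine ⟨g F, mem_range_self F, fun ⟨x, hx, hxy⟩ => hx (hyF hxy), fun y' hy' => ?_⟩
    obtain ⟨x, rfl⟩ := hsurj y'
    by_contra hx
    exact hy' ⟨x, fun h => hx (hFV h), rfl⟩
  calc tweight Y ≤ #(Finset B) := tweight_le_mk_of_subset_range hbasis subset_rfl
    _ ≤ max ℵ₀ (tweight X) := hBw ▸ mk_finset_le_max B

lemma tweight_le_of_dense_image [CompactSpace X] [T2Space Y] {f : X → Y} (hf : Continuous f)
    {T : Set X} (hT : Dense (f '' T)) : tweight Y ≤ max ℵ₀ (tweight (closure T)) := by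
  have hcl : IsCompact (closure T) := isClosed_closure.isCompact
  have himage : f '' closure T = Set.univ :=
    eq_univ_of_univ_subset <| hT.closure_eq ▸ (closure_mono (image_mono subset_closure)).trans
      (hcl.image hf).isClosed.closure_subset
  have : CompactSpace (closure T) := isCompact_iff_compactSpace.1 hcl
  refine tweight_le_of_continuous_surjective (f := fun x : closure T => f x)
    (hf.comp continuous_subtype_val) fun y => ?_
  obtain ⟨x, hx, rfl⟩ := himage.symm ▸ mem_univ y
  exact ⟨⟨x, hx⟩, rfl⟩

/-- Urysohn functions for the pairs of basic open sets with disjoint closures. -/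
lemma exists_separating_continuousMap [CompactSpace Y] [T2Space Y] :
    ∃ G : Set C(Y, ℝ), #G ≤ max ℵ₀ (tweight Y) ∧ ∀ y₁ y₂, y₁ ≠ y₂ → ∃ g ∈ G, g y₁ ≠ g y₂ := by
  obtain ⟨B, hB, hBw⟩ := exists_isTopologicalBasis_mk_eq_tweight Y
  have hurysohn : ∀ p : {p : B × B // Disjoint (closure (p.1 : Set Y)) (closure p.2)},
      ∃ φ : C(Y, ℝ), EqOn φ 0 (closure p.1.1) ∧ EqOn φ 1 (closure p.1.2) := fun p =>
    let ⟨φ, h0, h1, _⟩ := exists_continuous_zero_one_of_isClosed isClosed_closure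
      isClosed_closure p.2
    ⟨φ, h0, h1⟩
  choose φ hφ0 hφ1 using hurysohn
  refine ⟨range φ, mk_range_le.trans <| (mk_subtype_le _).trans ?_, fun y₁ y₂ hne => ?_⟩
  · simp only [mk_prod, lift_id, hBw]
    exact (mul_le_max _ _).trans_eq (by rw [max_self, max_comm])
  obtain ⟨O₁, O₂, hO₁, hO₂, hy₁, hy₂, hdisj⟩ := t2_separation hne
  obtain ⟨U₁, hU₁, hyU₁, hUO₁⟩ := hB.exists_closure_subset (hO₁.mem_nhds hy₁)
  obtain ⟨U₂, hU₂, hyU₂, hUO₂⟩ := hB.exists_closure_subset (hO₂.mem_nhds hy₂)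
  let p : {p : B × B // Disjoint (closure (p.1 : Set Y)) (closure p.2)} :=
    ⟨(⟨U₁, hU₁⟩, ⟨U₂, hU₂⟩), hdisj.mono hUO₁ hUO₂⟩
  refine ⟨φ p, mem_range_self p, ?_⟩
  rw [hφ0 p (subset_closure hyU₁), hφ1 p (subset_closure hyU₂)]
  exact zero_ne_one

end Compact

lemma DependsOn.comp₂ {ι β γ δ : Type*} {α : ι → Type*} {f : (∀ i, α i) → β}
    {g : (∀ i, α i) → γ} {s t : Set ι} (op : β → γ → δ) (hf : DependsOn f s)
    (hg : DependsOn g t) : DependsOn (fun x => op (f x) (g x)) (s ∪ t) := fun _ _ hxy =>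
  congrArg₂ op (hf.mono subset_union_left hxy) (hg.mono subset_union_right hxy)

section Coordinates

variable {ι X : Type*} [TopologicalSpace X]

variable (ι X) in
def finitelyDependentSubalgebra : Subalgebra ℝ C(ι → X, ℝ) where
  carrier := {g | ∃ I : Finset ι, DependsOn g I}
  mul_mem' := by
    classical
    rintro g₁ g₂ ⟨I₁, h₁⟩ ⟨I₂, h₂⟩
    exact ⟨I₁ ∪ I₂, by rw [Finset.coe_union]; exact h₁.comp₂ (· * ·) h₂⟩
  add_mem' := by
    classical
    rintro g₁ g₂ ⟨I₁, h₁⟩ ⟨I₂, h₂⟩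
    exact ⟨I₁ ∪ I₂, by rw [Finset.coe_union]; exact h₁.comp₂ (· + ·) h₂⟩
  algebraMap_mem' _ := ⟨∅, fun _ _ _ => rfl⟩

lemma finitelyDependentSubalgebra_separatesPoints [T2Space X] [CompactSpace X] :
    (finitelyDependentSubalgebra ι X).SeparatesPoints := by
  intro x y hxy
  obtain ⟨i, hi⟩ := Function.ne_iff.1 hxy
  obtain ⟨φ, hφx, hφy, -⟩ := exists_continuous_zero_one_of_isClosed isClosed_singleton
    isClosed_singleton (disjoint_singleton.2 hi)
  refine ⟨_, ⟨φ.comp ⟨fun z => z i, continuous_apply i⟩, ⟨{i}, fun a b hab => ?_⟩, rfl⟩, ?_⟩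
  · simp [hab i (Finset.mem_singleton_self i)]
  · simp [hφx rfl, hφy rfl]

/-- Stone–Weierstrass: `g` is a uniform limit of functions of finitely many coordinates. -/
lemma ContinuousMap.exists_countable_dependsOn [T2Space X] [CompactSpace X] (g : C(ι → X, ℝ)) :
    ∃ J : Set ι, J.Countable ∧ DependsOn g J := by
  have hg : g ∈ closure (finitelyDependentSubalgebra ι X : Set C(ι → X, ℝ)) := by
    rw [← Subalgebra.topologicalClosure_coe,
      subalgebra_topologicalClosure_eq_top_of_separatesPoints _
        finitelyDependentSubalgebra_separatesPoints]
    trivial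
  obtain ⟨h, hA, hlim⟩ := mem_closure_iff_seq_limit.1 hg
  choose I hI using hA
  refine ⟨⋃ n, I n, countable_iUnion fun n => (I n).countable_toSet, fun x y hxy => ?_⟩
  have hxy' : ∀ n, h n x = h n y := fun n => hI n fun i hi => hxy i (mem_iUnion.2 ⟨n, hi⟩)
  refine tendsto_nhds_unique ?_ (((continuous_eval_const y).tendsto g).comp hlim)
  simpa only [Function.comp_def, hxy'] using ((continuous_eval_const x).tendsto g).comp hlim

end Coordinates

section FiniteSupport

variable {ι β : Type u}

lemma dense_setOf_finite_ne {X : ι → Type*} [∀ i, TopologicalSpace (X i)] (c : ∀ i, X i) :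
    Dense {x : ∀ i, X i | {i | x i ≠ c i}.Finite} := by
  classical
  refine fun x => mem_closure_iff_nhds.2 fun s hs => ?_
  obtain ⟨I, hI⟩ := exists_finset_piecewise_mem_of_mem_nhds hs c
  refine ⟨_, hI, I.finite_toSet.subset fun i hi => ?_⟩
  by_contra hiI
  exact hi (I.piecewise_eq_of_notMem _ _ hiI)

/-- A point with finite support inside `J` is determined by the finite graph of its restriction
to the support. -/
lemma mk_setOf_finite_ne_subset_le (b : β) (J : Set ι) :
    #{x : ι → β | {i | x i ≠ b}.Finite ∧ {i | x i ≠ b} ⊆ J} ≤ max ℵ₀ (#J * #β) := by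
  let graph (x : ι → β) : Set (J × β) := {p | p.2 ≠ b ∧ x p.1 = p.2}
  have hfin {x : ι → β} (hx : {i | x i ≠ b}.Finite) : (graph x).Finite := by
    refine Finite.of_finite_image (f := fun p => (p.1 : ι)) (hx.subset ?_) ?_
    · rintro _ ⟨p, ⟨hpb, hpx⟩, rfl⟩
      exact ne_of_eq_of_ne hpx hpb
    · rintro p ⟨-, hp⟩ q ⟨-, hq⟩ hpq
      have h : p.1 = q.1 := Subtype.ext hpq
      exact Prod.ext h (hp.symm.trans (h ▸ hq))
  have hgraph {x y : ι → β} (hxJ : {i | x i ≠ b} ⊆ J) (h : graph x = graph y) (i : ι)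
      (hi : x i ≠ b) : x i = y i :=
    have hmem : (⟨i, hxJ hi⟩, x i) ∈ graph y := h ▸ ⟨hi, rfl⟩
    hmem.2.symm
  have hinj : Injective fun x : {x : ι → β | {i | x i ≠ b}.Finite ∧ {i | x i ≠ b} ⊆ J} =>
      (hfin x.2.1).toFinset := by
    rintro ⟨x, hx, hxJ⟩ ⟨y, hy, hyJ⟩ hxy
    have h : graph x = graph y := by simpa using hxy
    refine Subtype.ext (funext fun i => ?_)
    change x i = y i
    by_cases hxi : x i = b
    · by_cases hyi : y i = b
      · rw [hxi, hyi]
      · exact (hgraph hyJ h.symm i hyi).symm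
    · exact hgraph hxJ h i hxi
  calc _ ≤ #(Finset (J × β)) := mk_le_of_injective hinj
    _ ≤ max ℵ₀ (#J * #β) := by simpa using mk_finset_le_max (J × β)

lemma mk_image_setOf_finite_ne_le {Y : Type u} (b : β) {f : (ι → β) → Y} {J : Set ι}
    (hf : DependsOn f J) : #(f '' {x | {i | x i ≠ b}.Finite}) ≤ max ℵ₀ (#J * #β) := by
  classical
  have hsub : f '' {x | {i | x i ≠ b}.Finite} ⊆
      f '' {x | {i | x i ≠ b}.Finite ∧ {i | x i ≠ b} ⊆ J} := by
    rintro _ ⟨x, hx, rfl⟩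
    refine ⟨J.piecewise x fun _ => b, ⟨hx.subset fun i hi => ?_, fun i hi => ?_⟩, ?_⟩
    · by_cases hiJ : i ∈ J <;> simp_all
    · by_contra hiJ
      exact hi (J.piecewise_eq_of_notMem _ _ hiJ)
    · exact hf fun i hi => J.piecewise_eq_of_mem _ _ hi
  exact (mk_le_mk_of_subset hsub).trans (mk_image_le.trans (mk_setOf_finite_ne_subset_le b J))

end FiniteSupport

section APow

variable {μ κ lam : Cardinal.{u}}

instance : CompactSpace (ACompact μ) := inferInstanceAs (CompactSpace (OnePoint μ.out))

instance : T2Space (ACompact μ) := inferInstanceAs (T2Space (OnePoint μ.out))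

instance : CompactSpace (APow μ κ) := inferInstanceAs (CompactSpace (κ.out → ACompact μ))

lemma dense_finSupport (μ κ : Cardinal.{u}) : Dense (finSupport μ κ) :=
  dense_setOf_finite_ne (X := fun _ : κ.out => ACompact μ) fun _ => ∞

lemma le_tweight_aPow (hμ : μ ≠ 0) : κ ≤ tweight (APow μ κ) := by
  classical
  obtain ⟨a⟩ : Nonempty μ.out := mk_ne_zero_iff.1 (by rwa [mk_out])
  have ha : IsOpen {(a : OnePoint μ.out)} := by
    simpa using isOpen_image_coe.2 (isOpen_discrete {a})
  refine (mk_out κ).ge.trans <| mk_le_tweight_of_mem_iff (X := APow μ κ)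
    (fun ξ η => if η = ξ then (a : OnePoint μ.out) else ∞)
    (fun ξ => {x : κ.out → OnePoint μ.out | x ξ = a})
    (fun ξ => ha.preimage (continuous_apply (A := fun _ : κ.out => OnePoint μ.out) ξ))
    fun ξ η => ?_
  change (if ξ = η then (a : OnePoint μ.out) else ∞) = a ↔ η = ξ
  split_ifs with h
  · exact iff_of_true rfl h.symm
  · exact iff_of_false (infty_ne_coe a) (Ne.symm h)

lemma tweight_closure_lt (hμ : ℵ₀ ≤ μ) (hμlam : μ < lam) {T : Set (APow μ κ)}
    (hTS : T ⊆ finSupport μ κ) (hT : #T < lam) : tweight (closure T) < lam := by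
  have hlam : ℵ₀ < lam := hμ.trans_lt hμlam
  let J : Set κ.out := ⋃ x ∈ T, {ξ | x ξ ≠ ∞}
  have hJ : #J < lam := (mk_biUnion_le_mul_aleph0 fun x hx => (hTS hx).countable).trans_lt
    (mul_lt_of_lt hlam.le hT hlam)
  have hclT : closure T ⊆ ⋂ ξ ∈ Jᶜ, {x | x ξ = ∞} :=
    closure_minimal
      (fun x hx => mem_iInter₂.2 fun ξ hξ => not_not.1 fun h => hξ (mem_biUnion hx h))
      (isClosed_biInter fun ξ _ => isClosed_singleton.preimage (continuous_apply ξ))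
  have : CompactSpace (closure T) := isCompact_iff_compactSpace.1 isClosed_closure.isCompact
  let r : closure T → (J → ACompact μ) := fun x j => x.1 j
  have hinj : Injective r := fun x y hxy => Subtype.ext <| funext fun ξ => by
    by_cases hξ : ξ ∈ J
    · exact congrFun hxy ⟨ξ, hξ⟩
    · rw [mem_iInter₂.1 (hclT x.2) ξ hξ, mem_iInter₂.1 (hclT y.2) ξ hξ]
  have hr : IsInducing r :=
    (Continuous.isClosedEmbedding
      (continuous_pi fun j => (continuous_apply _).comp continuous_subtype_val) hinj).isInducing
  calc tweight (closure T) ≤ tweight (J → ACompact μ) := tweight_le_of_isInducing hr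
    _ ≤ max ℵ₀ (#J * tweight (ACompact μ)) := tweight_pi_le J
    _ ≤ max ℵ₀ (#J * max ℵ₀ #μ.out) := by gcongr; exact tweight_onePoint_le μ.out
    _ < lam := max_lt hlam (mul_lt_of_lt hlam.le hJ (max_lt hlam (by rwa [mk_out])))

section Image

variable {Y : Type u} [TopologicalSpace Y] [T2Space Y] {f : APow μ κ → Y}

lemma mk_image_finSupport_le (hμ : ℵ₀ ≤ μ) (hμlam : μ < lam) (hf : Continuous f)
    (hsurj : Surjective f) (hw : tweight Y = lam) : #(f '' finSupport μ κ) ≤ lam := by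
  have hlam : ℵ₀ < lam := hμ.trans_lt hμlam
  have : CompactSpace Y := hsurj.compactSpace hf
  obtain ⟨G, hG, hsep⟩ := exists_separating_continuousMap (Y := Y)
  choose J hJc hJ using fun g : C(Y, ℝ) =>
    (g.comp ⟨f, hf⟩ : C(κ.out → ACompact μ, ℝ)).exists_countable_dependsOn
  have hfJ : DependsOn f (⋃ g ∈ G, J g) := fun x y hxy => by
    by_contra hne
    obtain ⟨g, hg, hgne⟩ := hsep _ _ hne
    exact hgne (hJ g fun ξ hξ => hxy ξ (mem_biUnion hg hξ))
  have hGlam : #G ≤ lam := hG.trans (by rw [hw]; exact max_le hlam.le le_rfl)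
  have hJlam : #(⋃ g ∈ G, J g) ≤ lam := (mk_biUnion_le_mul_aleph0 fun g _ => hJc g).trans
    ((mul_le_mul' hGlam hlam.le).trans (mul_eq_self hlam.le).le)
  have hA : #(ACompact μ) ≤ lam := by
    change #(Option μ.out) ≤ lam
    rw [mk_option, mk_out]
    exact (add_lt_of_lt hlam.le hμlam (one_lt_aleph0.trans hlam)).le
  exact (mk_image_setOf_finite_ne_le (ι := κ.out) (β := ACompact μ) ∞ hfJ).trans
    (max_le hlam.le ((mul_le_mul' hJlam hA).trans (mul_eq_self hlam.le).le))

lemma le_mk_image_finSupport (hμ : ℵ₀ ≤ μ) (hμlam : μ < lam) (hf : Continuous f)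
    (hsurj : Surjective f) (hw : tweight Y = lam) : lam ≤ #(f '' finSupport μ κ) := by
  by_contra! hlt
  obtain ⟨T, hTS, hT⟩ := exists_subset_bijOn (finSupport μ κ) f
  have hTlam : #T < lam := calc
    #T = #(f '' T) := (mk_image_eq_of_injOn f T hT.injOn).symm
    _ = #(f '' finSupport μ κ) := by rw [hT.image_eq]
    _ < lam := hlt
  have hdense : Dense (f '' T) :=
    hT.image_eq ▸ hsurj.denseRange.dense_image hf (dense_finSupport μ κ)
  exact (tweight_le_of_dense_image hf hdense).not_gt
    (hw ▸ max_lt (hμ.trans_lt hμlam) (tweight_closure_lt hμ hμlam hTS hTlam))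

end Image

end APow

/-- Theorem 3.4 (tm:mk). -/
theorem statement10 (μ lam κ : Cardinal.{u}) (hμ : ℵ₀ ≤ μ) (h1 : μ < lam) (h2 : lam ≤ κ) :
    lam ≤ tweight (APow μ κ) ∧ DeltaWitness lam (APow μ κ) (finSupport μ κ) :=
  ⟨h2.trans (le_tweight_aPow (aleph0_pos.trans_le hμ).ne'), dense_finSupport μ κ,
    fun _ hTS hT => tweight_closure_lt hμ h1 hTS hT,
    fun _ _ _ _ hf hsurj hw =>
      (mk_image_finSupport_le hμ h1 hf hsurj hw).antisymm
        (le_mk_image_finSupport hμ h1 hf hsurj hw)⟩
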